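/- Let R_1, R_2, R_3 be complex matrices each with n columns (possibly different numbers of rows). Then the 3×3 matrix M with entries m_jk = ||R_j^* R_k||_tr, the trace norm of R_j^* R_k, is positive semi-definite. -/

import Mathlib

open Matrix ComplexOrder

/-- The trace norm of a rectangular complex matrix: `tr ((Xᴴ X)^{1/2})`,
which equals the sum of the singular values of `X`. -/
noncomputable def traceNorm {m n : ℕ} (X : Matrix (Fin m) (Fin n) ℂ) : ℝ :=
  (((Matrix.posSemidef_conjTranspose_mul_self X).1.eigenvectorUnitary : Matrix (Fin n) (Fin n) ℂ) *
    diagonal (((↑) : ℝ → ℂ) ∘ Real.sqrt ∘ (Matrix.posSemidef_conjTranspose_mul_self X).1.eigenvalues) *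
    (star (Matrix.posSemidef_conjTranspose_mul_self X).1.eigenvectorUnitary :
      Matrix (Fin n) (Fin n) ℂ)).trace.re

/-!
After padding the `Rⱼ` with zero columns to a common width, all of them live in one space of
matrices with the real Frobenius inner product `⟪A, B⟫ = Re tr (Aᴴ B)`. By the singular value
decomposition, `‖Aᴴ B‖_tr` is the maximum of `Re tr (Aᴴ B U) = ⟪A, B U⟫` over unitary `U`, so
`θ(A, B) = arccos (‖Aᴴ B‖_tr / (‖A‖_F ‖B‖_F))` is the least angle between `A` and the orbit of `B`
under right multiplication by unitaries. These multiplications are isometries, so `θ` inherits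
the triangle inequality from the angle between vectors. The matrix of the theorem is `D C D` with
`D = diag ‖Rⱼ‖_F` and `C = (cos θ(Rᵢ, Rⱼ))`, and a `3 × 3` matrix of cosines of angles in
`[0, π / 2]` satisfying the triangle inequalities is positive semidefinite.
-/

open scoped MatrixOrder

namespace Matrix

noncomputable def nuclearNorm {p q : Type*} [Fintype p] [Fintype q] [DecidableEq q]
    (X : Matrix p q ℂ) : ℝ :=
  (CFC.sqrt (Xᴴ * X)).trace.re

theorem _root_.traceNorm_eq_nuclearNorm {m n : ℕ} (X : Matrix (Fin m) (Fin n) ℂ) :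
    traceNorm X = X.nuclearNorm := by
  have hX := posSemidef_conjTranspose_mul_self X
  rw [nuclearNorm, CFC.sqrt_eq_real_sqrt _ hX.nonneg, cfcₙ_eq_cfc, hX.1.cfc_eq, IsHermitian.cfc,
    Unitary.conjStarAlgAut_apply]
  rfl

section Square

variable {n : Type*} [Fintype n] [DecidableEq n]

theorem exists_mem_unitaryGroup_eq_mul_diagonal_of_isDiag {B : Matrix n n ℂ}
    (hB : (Bᴴ * B).IsDiag) :
    ∃ W ∈ unitaryGroup n ℂ, ∃ σ : n → ℝ, 0 ≤ σ ∧ B = W * diagonal ((↑) ∘ σ) := by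
  let c : n → EuclideanSpace ℂ n := fun j => WithLp.toLp 2 (Bᵀ j)
  have hc : Pairwise fun i j => inner ℂ (c i) (c j) = 0 := fun i j hij => by
    simpa [c, EuclideanSpace.inner_eq_star_dotProduct, dotProduct, mul_apply, mul_comm]
      using hB hij
  have hv : Orthonormal ℂ ({j | c j ≠ 0}.domRestrict fun j => (‖c j‖⁻¹ : ℂ) • c j) :=
    ⟨fun j => norm_smul_inv_norm j.2, fun i j hij => by
      simp [inner_smul_left, inner_smul_right, hc (Subtype.coe_injective.ne hij)]⟩
  obtain ⟨b, hb⟩ := hv.exists_orthonormalBasis_extension_of_card_eq finrank_euclideanSpace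
  refine ⟨(EuclideanSpace.basisFun n ℂ).toBasis.toMatrix b,
    (EuclideanSpace.basisFun n ℂ).toMatrix_orthonormalBasis_mem_unitary b,
    fun j => ‖c j‖, fun j => norm_nonneg _, ?_⟩
  have hW : ∀ i j, (EuclideanSpace.basisFun n ℂ).toBasis.toMatrix b i j = b j i := fun _ _ => rfl
  ext i j
  rw [mul_diagonal, hW, show B i j = c j i from rfl]
  by_cases hj : c j = 0
  · simp [hj]
  · have hcj : (‖c j‖ : ℂ) ≠ 0 := by simpa using hj
    rw [hb j hj, PiLp.smul_apply, smul_eq_mul, Function.comp_apply]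
    field_simp

theorem exists_svd (A : Matrix n n ℂ) :
    ∃ W ∈ unitaryGroup n ℂ, ∃ V ∈ unitaryGroup n ℂ, ∃ σ : n → ℝ, 0 ≤ σ ∧
      A = W * diagonal ((↑) ∘ σ) * star V := by
  let hH := isHermitian_conjTranspose_mul_self A
  let V : Matrix n n ℂ := hH.eigenvectorUnitary
  have hV : V ∈ unitaryGroup n ℂ := hH.eigenvectorUnitary.2
  have hdiag : ((A * V)ᴴ * (A * V)).IsDiag := by
    have h := hH.conjStarAlgAut_star_eigenvectorUnitary
    rw [Unitary.conjStarAlgAut_apply, Unitary.coe_star, star_star] at h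
    rw [conjTranspose_mul, ← star_eq_conjTranspose V, mul_assoc, ← mul_assoc Aᴴ, ← mul_assoc, h]
    exact isDiag_diagonal _
  obtain ⟨W, hW, σ, hσ, hAV⟩ := exists_mem_unitaryGroup_eq_mul_diagonal_of_isDiag hdiag
  refine ⟨W, hW, V, hV, σ, hσ, ?_⟩
  rw [← hAV, mul_assoc, Unitary.mul_star_self_of_mem hV, mul_one]

theorem nuclearNorm_eq_sum_of_eq_mul_diagonal_mul {A W V : Matrix n n ℂ} {σ : n → ℝ}
    (hW : W ∈ unitaryGroup n ℂ) (hV : V ∈ unitaryGroup n ℂ) (hσ : 0 ≤ σ)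
    (hA : A = W * diagonal ((↑) ∘ σ) * star V) :
    A.nuclearNorm = ∑ i, σ i := by
  have hD : 0 ≤ diagonal (((↑) : ℝ → ℂ) ∘ σ) :=
    (PosSemidef.diagonal fun i => Complex.zero_le_real.mpr (hσ i)).nonneg
  have hsqrt : CFC.sqrt (Aᴴ * A) = V * diagonal ((↑) ∘ σ) * star V := by
    refine CFC.sqrt_unique ?_ (by simpa using star_left_conjugate_nonneg hD (star V))
    have hDs : star (diagonal (((↑) : ℝ → ℂ) ∘ σ)) = diagonal ((↑) ∘ σ) :=
      (IsSelfAdjoint.of_nonneg hD).star_eq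
    rw [hA, ← star_eq_conjTranspose, star_mul, star_mul, star_star, hDs]
    simp only [mul_assoc]
    rw [← mul_assoc (star V) V, Unitary.star_mul_self_of_mem hV, one_mul,
      ← mul_assoc (star W) W, Unitary.star_mul_self_of_mem hW, one_mul]
  rw [nuclearNorm, hsqrt, trace_mul_cycle, Unitary.star_mul_self_of_mem hV, one_mul,
    trace_diagonal]
  simp

theorem re_trace_mul_le_nuclearNorm (A : Matrix n n ℂ) {U : Matrix n n ℂ}
    (hU : U ∈ unitaryGroup n ℂ) : (A * U).trace.re ≤ A.nuclearNorm := by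
  obtain ⟨W, hW, V, hV, σ, hσ, hA⟩ := exists_svd A
  have hX : star V * U * W ∈ unitaryGroup n ℂ := mul_mem (mul_mem (Unitary.star_mem hV) hU) hW
  have htr : (A * U).trace = ∑ i, σ i * (star V * U * W) i i := by
    rw [hA, mul_assoc, mul_assoc, trace_mul_comm, mul_assoc, mul_assoc]
    simp [trace, diagonal_mul]
  rw [nuclearNorm_eq_sum_of_eq_mul_diagonal_mul hW hV hσ hA, htr, Complex.re_sum]
  refine Finset.sum_le_sum fun i _ => ?_
  rw [Complex.re_ofReal_mul]
  exact mul_le_of_le_one_right (hσ i)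
    ((Complex.re_le_norm _).trans (entry_norm_bound_of_unitary hX i i))

theorem exists_mem_unitaryGroup_re_trace_mul_eq_nuclearNorm (A : Matrix n n ℂ) :
    ∃ U ∈ unitaryGroup n ℂ, (A * U).trace.re = A.nuclearNorm := by
  obtain ⟨W, hW, V, hV, σ, hσ, hA⟩ := exists_svd A
  refine ⟨V * star W, mul_mem hV (Unitary.star_mem hW), ?_⟩
  rw [nuclearNorm_eq_sum_of_eq_mul_diagonal_mul hW hV hσ hA, hA, mul_assoc, mul_assoc,
    ← mul_assoc (star V), Unitary.star_mul_self_of_mem hV, one_mul, trace_mul_comm, mul_assoc,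
    Unitary.star_mul_self_of_mem hW, mul_one, trace_diagonal, Complex.re_sum]
  simp

end Square

section Rectangular

variable {p q r : Type*} [Fintype p] [Fintype q] [Fintype r] [DecidableEq q]

theorem nuclearNorm_nonneg (X : Matrix p q ℂ) : 0 ≤ X.nuclearNorm :=
  (Complex.le_def.mp (CFC.sqrt_nonneg (Xᴴ * X)).posSemidef.trace_nonneg).1

theorem PosSemidef.nuclearNorm_eq_re_trace {P : Matrix q q ℂ} (hP : P.PosSemidef) :
    P.nuclearNorm = P.trace.re := by
  rw [nuclearNorm, hP.1.eq, CFC.sqrt_mul_self P hP.nonneg]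

theorem nuclearNorm_mul_of_conjTranspose_mul_eq_one [DecidableEq p] {E : Matrix r p ℂ}
    (hE : Eᴴ * E = 1) (X : Matrix p q ℂ) : (E * X).nuclearNorm = X.nuclearNorm := by
  rw [nuclearNorm, conjTranspose_mul, Matrix.mul_assoc, ← Matrix.mul_assoc Eᴴ, hE,
    Matrix.one_mul, nuclearNorm]

theorem nuclearNorm_mul_of_mul_conjTranspose_eq_one [DecidableEq r] {F : Matrix q r ℂ}
    (hF : F * Fᴴ = 1) (X : Matrix p q ℂ) : (X * F).nuclearNorm = X.nuclearNorm := by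
  have hsqrt : CFC.sqrt ((X * F)ᴴ * (X * F)) = Fᴴ * CFC.sqrt (Xᴴ * X) * F := by
    refine CFC.sqrt_unique ?_
      ((CFC.sqrt_nonneg _).posSemidef.conjTranspose_mul_mul_same F).nonneg
    set S := CFC.sqrt (Xᴴ * X)
    calc Fᴴ * S * F * (Fᴴ * S * F) = Fᴴ * S * (F * Fᴴ) * S * F := by simp only [Matrix.mul_assoc]
      _ = Fᴴ * (S * S) * F := by rw [hF, Matrix.mul_one]; simp only [Matrix.mul_assoc]
      _ = (X * F)ᴴ * (X * F) := by
        rw [CFC.sqrt_mul_sqrt_self _ (posSemidef_conjTranspose_mul_self X).nonneg,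
          conjTranspose_mul]
        simp only [Matrix.mul_assoc]
  rw [nuclearNorm, hsqrt, trace_mul_cycle, hF, Matrix.one_mul, nuclearNorm]

theorem submatrix_one_mul_conjTranspose_submatrix_one {α k r : Type*} [Semiring α] [StarRing α]
    [Fintype r] [DecidableEq k] [DecidableEq r] {e : k → r} (he : Function.Injective e) :
    (1 : Matrix r r α).submatrix e id * ((1 : Matrix r r α).submatrix e id)ᴴ = 1 := by
  rw [conjTranspose_submatrix, conjTranspose_one, ← submatrix_mul _ _ _ _ _ Function.bijective_id,
    Matrix.one_mul, submatrix_one _ he]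

theorem nuclearNorm_conjTranspose_mul_submatrix_one {q' r : Type*} [Fintype q'] [Fintype r]
    [DecidableEq q'] [DecidableEq r] {f : q → r} {g : q' → r} (hf : Function.Injective f)
    (hg : Function.Injective g) (X : Matrix p q ℂ) (Y : Matrix p q' ℂ) :
    ((X * (1 : Matrix r r ℂ).submatrix f id)ᴴ *
        (Y * (1 : Matrix r r ℂ).submatrix g id)).nuclearNorm = (Xᴴ * Y).nuclearNorm := by
  rw [conjTranspose_mul, Matrix.mul_assoc, ← Matrix.mul_assoc Xᴴ, ← Matrix.mul_assoc,
    nuclearNorm_mul_of_mul_conjTranspose_eq_one (submatrix_one_mul_conjTranspose_submatrix_one hg),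
    nuclearNorm_mul_of_conjTranspose_mul_eq_one (by
      rw [conjTranspose_conjTranspose]; exact submatrix_one_mul_conjTranspose_submatrix_one hf)]

end Rectangular

section TraceAngle

open InnerProductGeometry Real
open scoped RealInnerProductSpace

variable {m n : Type*} [Fintype m] [Fintype n]

def frobeniusVec (A : Matrix m n ℂ) : EuclideanSpace ℂ (m × n) :=
  WithLp.toLp 2 fun ij => A ij.1 ij.2

theorem real_inner_frobeniusVec (A B : Matrix m n ℂ) :
    ⟪A.frobeniusVec, B.frobeniusVec⟫ = (Aᴴ * B).trace.re := by
  rw [PiLp.inner_apply, Fintype.sum_prod_type, Finset.sum_comm]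
  simp [frobeniusVec, Complex.inner, trace, mul_apply, Complex.re_sum, mul_comm]

variable [DecidableEq n]

theorem real_inner_frobeniusVec_mul_unitary {U : Matrix n n ℂ} (hU : U ∈ unitaryGroup n ℂ)
    (A B : Matrix m n ℂ) :
    ⟪(A * U).frobeniusVec, (B * U).frobeniusVec⟫ = ⟪A.frobeniusVec, B.frobeniusVec⟫ := by
  rw [real_inner_frobeniusVec, real_inner_frobeniusVec, conjTranspose_mul, Matrix.mul_assoc,
    trace_mul_comm, Matrix.mul_assoc, Matrix.mul_assoc, ← star_eq_conjTranspose,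
    Unitary.mul_star_self_of_mem hU, Matrix.mul_one]

theorem norm_frobeniusVec_mul_unitary {U : Matrix n n ℂ} (hU : U ∈ unitaryGroup n ℂ)
    (A : Matrix m n ℂ) : ‖(A * U).frobeniusVec‖ = ‖A.frobeniusVec‖ := by
  rw [norm_eq_sqrt_real_inner, norm_eq_sqrt_real_inner, real_inner_frobeniusVec_mul_unitary hU]

theorem angle_frobeniusVec_mul_unitary {U : Matrix n n ℂ} (hU : U ∈ unitaryGroup n ℂ)
    (A B : Matrix m n ℂ) :
    angle (A * U).frobeniusVec (B * U).frobeniusVec = angle A.frobeniusVec B.frobeniusVec := by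
  rw [angle, angle, real_inner_frobeniusVec_mul_unitary hU, norm_frobeniusVec_mul_unitary hU,
    norm_frobeniusVec_mul_unitary hU]

theorem sq_norm_frobeniusVec (A : Matrix m n ℂ) :
    ‖A.frobeniusVec‖ ^ 2 = (Aᴴ * A).nuclearNorm := by
  rw [(posSemidef_conjTranspose_mul_self A).nuclearNorm_eq_re_trace, ← real_inner_frobeniusVec,
    real_inner_self_eq_norm_sq]

noncomputable def traceAngle (A B : Matrix m n ℂ) : ℝ :=
  arccos ((Aᴴ * B).nuclearNorm / (‖A.frobeniusVec‖ * ‖B.frobeniusVec‖))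

theorem traceAngle_le_pi_div_two (A B : Matrix m n ℂ) : traceAngle A B ≤ π / 2 :=
  arccos_le_pi_div_two.mpr (div_nonneg (nuclearNorm_nonneg _) (by positivity))

theorem traceAngle_le_angle (A B : Matrix m n ℂ) {U : Matrix n n ℂ}
    (hU : U ∈ unitaryGroup n ℂ) : traceAngle A B ≤ angle A.frobeniusVec (B * U).frobeniusVec := by
  rw [traceAngle, angle, norm_frobeniusVec_mul_unitary hU, real_inner_frobeniusVec,
    ← Matrix.mul_assoc]
  exact arccos_le_arccos
    (div_le_div_of_nonneg_right (re_trace_mul_le_nuclearNorm _ hU) (by positivity))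

theorem angle_eq_traceAngle_of_re_trace_mul_eq {A B : Matrix m n ℂ} {U : Matrix n n ℂ}
    (hU : U ∈ unitaryGroup n ℂ) (h : (Aᴴ * B * U).trace.re = (Aᴴ * B).nuclearNorm) :
    angle A.frobeniusVec (B * U).frobeniusVec = traceAngle A B := by
  rw [traceAngle, angle, norm_frobeniusVec_mul_unitary hU, real_inner_frobeniusVec,
    ← Matrix.mul_assoc, h]

theorem exists_angle_eq_traceAngle (A B : Matrix m n ℂ) :
    ∃ U ∈ unitaryGroup n ℂ, angle A.frobeniusVec (B * U).frobeniusVec = traceAngle A B :=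
  let ⟨U, hU, h⟩ := exists_mem_unitaryGroup_re_trace_mul_eq_nuclearNorm (Aᴴ * B)
  ⟨U, hU, angle_eq_traceAngle_of_re_trace_mul_eq hU h⟩

theorem cos_traceAngle_mul_norm_mul_norm (A B : Matrix m n ℂ) :
    cos (traceAngle A B) * (‖A.frobeniusVec‖ * ‖B.frobeniusVec‖) = (Aᴴ * B).nuclearNorm := by
  obtain ⟨U, hU, h⟩ := exists_mem_unitaryGroup_re_trace_mul_eq_nuclearNorm (Aᴴ * B)
  rw [← angle_eq_traceAngle_of_re_trace_mul_eq hU h, ← norm_frobeniusVec_mul_unitary hU B,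
    cos_angle_mul_norm_mul_norm, real_inner_frobeniusVec, ← Matrix.mul_assoc, h]

theorem traceAngle_comm (A B : Matrix m n ℂ) : traceAngle A B = traceAngle B A := by
  suffices key : ∀ A B : Matrix m n ℂ, traceAngle B A ≤ traceAngle A B from
    le_antisymm (key B A) (key A B)
  intro A B
  obtain ⟨U, hU, hAB⟩ := exists_angle_eq_traceAngle A B
  calc traceAngle B A ≤ angle B.frobeniusVec (A * star U).frobeniusVec :=
        traceAngle_le_angle B A (Unitary.star_mem hU)
    _ = angle (B * U).frobeniusVec A.frobeniusVec := by
        rw [← angle_frobeniusVec_mul_unitary hU, Matrix.mul_assoc,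
          Unitary.star_mul_self_of_mem hU, Matrix.mul_one]
    _ = traceAngle A B := by rw [angle_comm, hAB]

theorem traceAngle_le_traceAngle_add_traceAngle (A B C : Matrix m n ℂ) :
    traceAngle A C ≤ traceAngle A B + traceAngle B C := by
  obtain ⟨U, hU, hAB⟩ := exists_angle_eq_traceAngle A B
  obtain ⟨V, hV, hBC⟩ := exists_angle_eq_traceAngle B C
  calc traceAngle A C ≤ angle A.frobeniusVec (C * V * U).frobeniusVec := by
        rw [Matrix.mul_assoc]; exact traceAngle_le_angle A C (mul_mem hV hU)
    _ ≤ angle A.frobeniusVec (B * U).frobeniusVec +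
          angle (B * U).frobeniusVec (C * V * U).frobeniusVec :=
        angle_le_angle_add_angle _ _ _
    _ = traceAngle A B + traceAngle B C := by rw [angle_frobeniusVec_mul_unitary hU, hAB, hBC]

end TraceAngle

section Drury

open Real

theorem posSemidef_cos_of_triangle {a b c : ℝ} (h₁ : |a - b| ≤ c) (h₂ : c ≤ a + b)
    (h₃ : a + b + c ≤ 2 * π) :
    (!![1, cos a, cos b; cos a, 1, cos c; cos b, cos c, 1] :
      Matrix (Fin 3) (Fin 3) ℝ).PosSemidef := by
  have hc₀ : 0 ≤ c := (abs_nonneg _).trans h₁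
  have hupper : cos c ≤ cos a * cos b + sin a * sin b := by
    rw [← cos_sub, ← cos_abs (a - b)]
    exact cos_le_cos_of_nonneg_of_le_pi (abs_nonneg _) (by linarith) h₁
  have hlower : cos a * cos b - sin a * sin b ≤ cos c := by
    rw [← cos_add]
    rcases le_total (a + b) π with h | h
    · exact cos_le_cos_of_nonneg_of_le_pi hc₀ h h₂
    · rw [← cos_two_pi_sub]
      exact cos_le_cos_of_nonneg_of_le_pi hc₀ (by linarith) (by linarith)
  rw [posSemidef_iff_dotProduct_mulVec]
  refine ⟨?_, fun x => ?_⟩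
  · ext i j
    fin_cases i <;> fin_cases j <;> rfl
  · simp only [star_trivial, dotProduct, mulVec, Fin.sum_univ_three, of_apply, cons_val',
      cons_val_zero, cons_val_one, cons_val_two, empty_val', cons_val_fin_one, head_cons,
      tail_cons, head_fin_const]
    have key : 0 ≤ (x 0 + cos a * x 1 + cos b * x 2) ^ 2 + (sin a * x 1) ^ 2 +
        (sin b * x 2) ^ 2 + 2 * (cos c - cos a * cos b) * (x 1 * x 2) := by
      rcases le_total 0 (x 1 * x 2) with h | h
      · nlinarith [mul_nonneg h (sub_nonneg.mpr hlower), sq_nonneg (sin a * x 1 - sin b * x 2)]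
      · nlinarith [mul_nonneg_of_nonpos_of_nonpos h (sub_nonpos.mpr hupper),
          sq_nonneg (sin a * x 1 + sin b * x 2)]
    linear_combination key + x 1 ^ 2 * sin_sq_add_cos_sq a + x 2 ^ 2 * sin_sq_add_cos_sq b

theorem posSemidef_nuclearNorm_conjTranspose_mul {m n : Type*} [Fintype m] [Fintype n]
    [DecidableEq n] (P : Fin 3 → Matrix m n ℂ) :
    (of fun i j => ((P i)ᴴ * P j).nuclearNorm).PosSemidef := by
  have h₀₂ := traceAngle_le_traceAngle_add_traceAngle (P 0) (P 1) (P 2)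
  have h₀₁ := traceAngle_le_traceAngle_add_traceAngle (P 0) (P 2) (P 1)
  have h₁₂ := traceAngle_le_traceAngle_add_traceAngle (P 1) (P 0) (P 2)
  rw [traceAngle_comm (P 2) (P 1)] at h₀₁
  rw [traceAngle_comm (P 1) (P 0)] at h₁₂
  have hC := posSemidef_cos_of_triangle (abs_sub_le_iff.mpr ⟨by linarith, by linarith⟩) h₁₂
    (by linarith [traceAngle_le_pi_div_two (P 0) (P 1), traceAngle_le_pi_div_two (P 0) (P 2),
      traceAngle_le_pi_div_two (P 1) (P 2), pi_pos])
  convert hC.conjTranspose_mul_mul_same (diagonal fun i => ‖(P i).frobeniusVec‖) using 1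
  ext i j
  rw [of_apply]
  rcases eq_or_ne i j with rfl | hij
  · rw [← sq_norm_frobeniusVec]
    fin_cases i <;> simp <;> ring
  · rw [← cos_traceAngle_mul_norm_mul_norm]
    fin_cases i <;> fin_cases j <;>
      simp_all [traceAngle_comm (P 1) (P 0), traceAngle_comm (P 2) (P 0),
        traceAngle_comm (P 2) (P 1)] <;> ring

end Drury

end Matrix

/-- Drury's theorem: for rectangular matrices `R₁, R₂, R₃` with a common number of
rows (so that all products `Rⱼᴴ * Rₖ` are defined), the `3 × 3` matrix of trace
norms `‖Rⱼᴴ Rₖ‖_tr` is positive semi-definite. -/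
theorem drury_traceNorm_gram_posSemidef {m n₁ n₂ n₃ : ℕ}
    (R₁ : Matrix (Fin m) (Fin n₁) ℂ) (R₂ : Matrix (Fin m) (Fin n₂) ℂ)
    (R₃ : Matrix (Fin m) (Fin n₃) ℂ) :
    (Matrix.of
      ![![traceNorm (R₁ᴴ * R₁), traceNorm (R₁ᴴ * R₂), traceNorm (R₁ᴴ * R₃)],
        ![traceNorm (R₂ᴴ * R₁), traceNorm (R₂ᴴ * R₂), traceNorm (R₂ᴴ * R₃)],
        ![traceNorm (R₃ᴴ * R₁), traceNorm (R₃ᴴ * R₂), traceNorm (R₃ᴴ * R₃)]]).PosSemidef := by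
  -- `R * I.submatrix e id` is `R` with its columns moved to the positions `e`, zero elsewhere.
  let I : Matrix (Fin n₁ ⊕ Fin n₂ ⊕ Fin n₃) (Fin n₁ ⊕ Fin n₂ ⊕ Fin n₃) ℂ := 1
  have h₁ : Function.Injective (Sum.inl : Fin n₁ → Fin n₁ ⊕ Fin n₂ ⊕ Fin n₃) :=
    Sum.inl_injective
  have h₂ : Function.Injective (Sum.inr ∘ Sum.inl : Fin n₂ → Fin n₁ ⊕ Fin n₂ ⊕ Fin n₃) :=
    Sum.inr_injective.comp Sum.inl_injective
  have h₃ : Function.Injective (Sum.inr ∘ Sum.inr : Fin n₃ → Fin n₁ ⊕ Fin n₂ ⊕ Fin n₃) :=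
    Sum.inr_injective.comp Sum.inr_injective
  convert posSemidef_nuclearNorm_conjTranspose_mul
    ![R₁ * I.submatrix Sum.inl id, R₂ * I.submatrix (Sum.inr ∘ Sum.inl) id,
      R₃ * I.submatrix (Sum.inr ∘ Sum.inr) id] using 1
  ext i j
  fin_cases i <;> fin_cases j <;>
    simp [-conjTranspose_mul, I, traceNorm_eq_nuclearNorm,
      nuclearNorm_conjTranspose_mul_submatrix_one, h₁, h₂, h₃]
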